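/- arXiv:1706.01623 — 8 statements merged into one kernel-verified Lean document; each statement's English description precedes it below -/
import Mathlib

section
/- If an MMSM instance is feasible with respect to D ≥ 0, then for every finite family 𝒮 of pairwise disjoint segments [x, x′] contained in [0, M], one has Σᵢ σ(i, D, 𝒮) ≥ Σ_{[x,x′]∈𝒮} (x′ − x). -/
open scoped Classical
open MeasureTheory

/-- Leftmost point of the barrier coverable by a sensor at `(x, y)` with radius `r`
under movement bound `D`. -/
noncomputable def lpos (x y r D : ℝ) : ℝ := x - Real.sqrt (D ^ 2 - y ^ 2) - r

/-- Rightmost point of the barrier coverable by a sensor at `(x, y)` with radius `r`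
under movement bound `D`. -/
noncomputable def gpos (x y r D : ℝ) : ℝ := x + Real.sqrt (D ^ 2 - y ^ 2) + r

/-- `λ(i, D, a, b)`: the maximum coverage a sensor at `(x, y)` with radius `r` can
provide for the segment `[a, b]` under movement bound `D`. -/
noncomputable def lam (x y r D a b : ℝ) : ℝ :=
  if D < |y| ∨ gpos x y r D ≤ a ∨ b ≤ lpos x y r D then 0
  else min (2 * r) (min b (gpos x y r D) - max a (lpos x y r D))

/-- `σ(i, D, 𝒮)`: the total coverage sensor `i` can provide for a family `𝒮` of
disjoint segments (each segment recorded as a pair of endpoints). -/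
noncomputable def sigma {n : ℕ} (x y r : Fin n → ℝ) (D : ℝ) (S : Finset (ℝ × ℝ))
    (i : Fin n) : ℝ :=
  min (2 * r i) (∑ s ∈ S, lam (x i) (y i) (r i) D s.1 s.2)

/-- The MMSM instance with sensors at `(x i, y i)` of radii `r i` and barrier `[0, M]`
is feasible with respect to movement bound `D`. -/
def Feasible {n : ℕ} (x y r : Fin n → ℝ) (M D : ℝ) : Prop :=
  ∃ (T : Finset (Fin n)) (p : Fin n → ℝ),
    (∀ i ∈ T, Real.sqrt ((x i - p i) ^ 2 + (y i) ^ 2) ≤ D) ∧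
    ∀ q ∈ Set.Icc (0 : ℝ) M, ∃ i ∈ T, |q - p i| ≤ r i

lemma ofReal_max_zero (t : ℝ) : ENNReal.ofReal (max t 0) = ENNReal.ofReal t := by
  rcases le_total t 0 with h | h
  · rw [max_eq_right h, ENNReal.ofReal_zero, eq_comm, ENNReal.ofReal_eq_zero]
    exact h
  · rw [max_eq_left h]

lemma lpos_le_gpos (x y r D : ℝ) (hr : 0 < r) : lpos x y r D ≤ gpos x y r D := by
  unfold lpos gpos
  have := Real.sqrt_nonneg (D ^ 2 - y ^ 2)
  linarith

lemma lam_nonneg {x y r D a b : ℝ} (hr : 0 < r) (hab : a ≤ b) :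
    0 ≤ lam x y r D a b := by
  unfold lam
  split_ifs with h
  · exact le_rfl
  · push_neg at h
    refine le_min (by linarith) ?_
    rw [sub_nonneg]
    exact max_le (le_min hab h.2.1.le) (le_min h.2.2.le (lpos_le_gpos x y r D hr))

/-- If an MMSM instance is feasible with respect to `D ≥ 0`, then for every finite family
`𝒮` of pairwise disjoint segments `[a, b] ⊆ [0, M]`, one has
`Σᵢ σ(i, D, 𝒮) ≥ Σ_{[a,b]∈𝒮} (b - a)`. -/
theorem stmt_1 {n : ℕ} (x y r : Fin n → ℝ) (M : ℝ) (hM : 0 < M)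
    (hr : ∀ i, 0 < r i) (D : ℝ) (hD : 0 ≤ D)
    (hfeas : Feasible x y r M D) :
    ∀ S : Finset (ℝ × ℝ),
      (∀ s ∈ S, s.1 < s.2 ∧ Set.Icc s.1 s.2 ⊆ Set.Icc (0 : ℝ) M) →
      (∀ s ∈ S, ∀ t ∈ S, s ≠ t → Disjoint (Set.Icc s.1 s.2) (Set.Icc t.1 t.2)) →
      ∑ s ∈ S, (s.2 - s.1) ≤ ∑ i : Fin n, sigma x y r D S i := by
  intro S hS hdis
  obtain ⟨T, p, hmove, hcov⟩ := hfeas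
  have key : ∀ i ∈ T, |y i| ≤ D ∧ lpos (x i) (y i) (r i) D ≤ p i - r i ∧
      p i + r i ≤ gpos (x i) (y i) (r i) D := by
    intro i hi
    have hs := hmove i hi
    have hA : (0:ℝ) ≤ (x i - p i) ^ 2 + (y i) ^ 2 := by positivity
    have hsq : (x i - p i) ^ 2 + (y i) ^ 2 ≤ D ^ 2 := by
      calc (x i - p i) ^ 2 + (y i) ^ 2
          = Real.sqrt ((x i - p i) ^ 2 + (y i) ^ 2) ^ 2 := (Real.sq_sqrt hA).symm
        _ ≤ D ^ 2 := pow_le_pow_left₀ (Real.sqrt_nonneg _) hs 2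
    have hy : |y i| ≤ D := by
      have h := Real.sqrt_le_sqrt (show (y i) ^ 2 ≤ D ^ 2 by nlinarith)
      rwa [Real.sqrt_sq_eq_abs, Real.sqrt_sq hD] at h
    have hxp : |x i - p i| ≤ Real.sqrt (D ^ 2 - (y i) ^ 2) := by
      have h := Real.sqrt_le_sqrt (show (x i - p i) ^ 2 ≤ D ^ 2 - (y i) ^ 2 by nlinarith)
      rwa [Real.sqrt_sq_eq_abs] at h
    have h1 := abs_le.mp hxp
    refine ⟨hy, ?_, ?_⟩
    · unfold lpos; linarith [h1.2]
    · unfold gpos; linarith [h1.1]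
  set c : Fin n → ℝ × ℝ → ℝ :=
    fun i s => max (min s.2 (p i + r i) - max s.1 (p i - r i)) 0 with hc
  have hc_nonneg : ∀ i s, 0 ≤ c i s := fun i s => le_max_right _ _
  have hvol : ∀ (i : Fin n) (s : ℝ × ℝ),
      volume (Set.Icc s.1 s.2 ∩ Set.Icc (p i - r i) (p i + r i))
      = ENNReal.ofReal (c i s) := by
    intro i s
    rw [Set.Icc_inter_Icc, Real.volume_Icc, hc, ← ofReal_max_zero]
  have stepA : ∀ s ∈ S, s.2 - s.1 ≤ ∑ i ∈ T, c i s := by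
    intro s hsS
    have hsub : Set.Icc s.1 s.2 ⊆
        ⋃ i ∈ T, (Set.Icc s.1 s.2 ∩ Set.Icc (p i - r i) (p i + r i)) := by
      intro q hq
      obtain ⟨i, hiT, hqi⟩ := hcov q ((hS s hsS).2 hq)
      have h2 := abs_le.mp hqi
      exact Set.mem_biUnion hiT ⟨hq, by constructor <;> linarith [h2.1, h2.2]⟩
    have hmeas := (measure_mono (μ := volume) hsub).trans (measure_biUnion_finset_le T _)
    rw [Real.volume_Icc] at hmeas
    have heq : ∑ i ∈ T, volume (Set.Icc s.1 s.2 ∩ Set.Icc (p i - r i) (p i + r i))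
        = ENNReal.ofReal (∑ i ∈ T, c i s) := by
      rw [ENNReal.ofReal_sum_of_nonneg (fun i _ => hc_nonneg i s)]
      exact Finset.sum_congr rfl (fun i _ => hvol i s)
    rw [heq] at hmeas
    exact (ENNReal.ofReal_le_ofReal_iff (Finset.sum_nonneg fun i _ => hc_nonneg i s)).mp hmeas
  have stepB : ∀ i ∈ T, ∀ s ∈ S, c i s ≤ lam (x i) (y i) (r i) D s.1 s.2 := by
    intro i hi s hsS
    obtain ⟨hy, hl, hg⟩ := key i hi
    have hab := (hS s hsS).1
    unfold lam
    split_ifs with h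
    · rcases h with h | h | h
      · exact absurd hy (not_le.mpr h)
      · apply max_le _ le_rfl
        have h1 := min_le_right s.2 (p i + r i)
        have h2 := le_max_left s.1 (p i - r i)
        linarith
      · apply max_le _ le_rfl
        have h1 := min_le_left s.2 (p i + r i)
        have h2 := le_max_right s.1 (p i - r i)
        linarith
    · push_neg at h
      apply max_le
      · apply le_min
        · have h1 := min_le_right s.2 (p i + r i)
          have h2 := le_max_right s.1 (p i - r i)
          linarith
        · have h1 : min s.2 (p i + r i) ≤ min s.2 (gpos (x i) (y i) (r i) D) :=
            min_le_min le_rfl hg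
          have h2 : max s.1 (lpos (x i) (y i) (r i) D) ≤ max s.1 (p i - r i) :=
            max_le_max le_rfl hl
          linarith
      · refine le_min (by linarith [hr i]) ?_
        rw [sub_nonneg]
        exact max_le (le_min hab.le h.2.1.le)
          (le_min h.2.2.le (lpos_le_gpos (x i) (y i) (r i) D (hr i)))
  have stepC : ∀ i ∈ T, ∑ s ∈ S, c i s ≤ 2 * r i := by
    intro i hi
    have hdisj : (S : Set (ℝ × ℝ)).PairwiseDisjoint
        (fun s => Set.Icc s.1 s.2 ∩ Set.Icc (p i - r i) (p i + r i)) := by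
      intro s hs t ht hne
      exact (hdis s hs t ht hne).mono Set.inter_subset_left Set.inter_subset_left
    have hmeq : volume (⋃ s ∈ S, (Set.Icc s.1 s.2 ∩ Set.Icc (p i - r i) (p i + r i)))
        = ∑ s ∈ S, volume (Set.Icc s.1 s.2 ∩ Set.Icc (p i - r i) (p i + r i)) :=
      measure_biUnion_finset hdisj (fun s _ => measurableSet_Icc.inter measurableSet_Icc)
    have hsub : (⋃ s ∈ S, (Set.Icc s.1 s.2 ∩ Set.Icc (p i - r i) (p i + r i)))
        ⊆ Set.Icc (p i - r i) (p i + r i) := by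
      simp only [Set.iUnion_subset_iff]
      intro s _
      exact Set.inter_subset_right
    have hle : ∑ s ∈ S, volume (Set.Icc s.1 s.2 ∩ Set.Icc (p i - r i) (p i + r i))
        ≤ ENNReal.ofReal (2 * r i) := by
      rw [← hmeq]
      have hv := measure_mono (μ := volume) hsub
      rw [Real.volume_Icc] at hv
      have : p i + r i - (p i - r i) = 2 * r i := by ring
      rwa [this] at hv
    have heq : ∑ s ∈ S, volume (Set.Icc s.1 s.2 ∩ Set.Icc (p i - r i) (p i + r i))
        = ENNReal.ofReal (∑ s ∈ S, c i s) := by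
      rw [ENNReal.ofReal_sum_of_nonneg (fun s _ => hc_nonneg i s)]
      exact Finset.sum_congr rfl (fun s _ => hvol i s)
    rw [heq] at hle
    exact (ENNReal.ofReal_le_ofReal_iff (by linarith [hr i])).mp hle
  calc ∑ s ∈ S, (s.2 - s.1) ≤ ∑ s ∈ S, ∑ i ∈ T, c i s := Finset.sum_le_sum stepA
    _ = ∑ i ∈ T, ∑ s ∈ S, c i s := Finset.sum_comm
    _ ≤ ∑ i ∈ T, sigma x y r D S i := by
        refine Finset.sum_le_sum (fun i hi => ?_)
        exact le_min (stepC i hi) (Finset.sum_le_sum (fun s hs => stepB i hi s hs))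
    _ ≤ ∑ i : Fin n, sigma x y r D S i := by
        refine Finset.sum_le_sum_of_subset_of_nonneg (Finset.subset_univ T) ?_
        intro i _ _
        exact le_min (by linarith [hr i])
          (Finset.sum_nonneg fun s hs => lam_nonneg (hr i) (hS s hs).1.le)
end

section
/- Let 0 < r₁ ≤ r₂ and consider the MMSM instance with barrier [0, 2r₁ + 2r₂] × {0} and two sensors: sensor 1 at (2r₂ + r₁, 0) with radius r₁ and sensor 2 at (2r₁ + r₂, 0) with radius r₂. Then the instance is feasible with respect to 2r₁, and every relocation that covers the barrier has some sensor with movement at least 2r₁; hence the minimum possible maximum movement equals 2r₁. -/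
lemma sqrt_aux (a : ℝ) : Real.sqrt (a ^ 2 + 0 ^ 2) = |a| := by
  rw [show (0:ℝ)^2 = 0 by ring, add_zero, Real.sqrt_sq_eq_abs]

lemma feas_aux (r₁ r₂ : ℝ) (h1 : 0 < r₁) (h12 : r₁ ≤ r₂) :
    Feasible ![2 * r₂ + r₁, 2 * r₁ + r₂] ![0, 0] ![r₁, r₂] (2 * r₁ + 2 * r₂) (2 * r₁) := by
  refine ⟨Finset.univ, ![2 * r₂ + r₁, r₂], ?_, ?_⟩
  · intro i _
    fin_cases i <;> simp [sqrt_aux] <;>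
      [linarith; rw [Real.sqrt_sq (by linarith : (0:ℝ) ≤ 2 * r₁)]]
  · intro q hq
    rcases hq with ⟨hq0, hqM⟩
    rcases le_or_gt q (2 * r₂) with h | h
    · exact ⟨1, Finset.mem_univ _, by simp [abs_le]; constructor <;> linarith⟩
    · exact ⟨0, Finset.mem_univ _, by simp [abs_le]; constructor <;> linarith⟩

lemma low_aux (r₁ r₂ : ℝ) (h1 : 0 < r₁) (h12 : r₁ ≤ r₂)
    (T : Finset (Fin 2)) (p : Fin 2 → ℝ)
    (hcov : ∀ q ∈ Set.Icc (0 : ℝ) (2 * r₁ + 2 * r₂), ∃ i ∈ T, |q - p i| ≤ ![r₁, r₂] i) :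
    ∃ i ∈ T, 2 * r₁ ≤
      Real.sqrt ((![2 * r₂ + r₁, 2 * r₁ + r₂] i - p i) ^ 2 + (![(0 : ℝ), 0] i) ^ 2) := by
  obtain ⟨i, hiT, hi⟩ := hcov 0 ⟨le_refl _, by linarith⟩
  refine ⟨i, hiT, ?_⟩
  fin_cases i <;> simp [abs_le] at hi <;> simp [sqrt_aux] <;>
    rw [Real.sqrt_sq_eq_abs, le_abs] <;> left <;> linarith [hi.2]

/-- For `0 < r₁ ≤ r₂`, the MMSM instance with barrier `[0, 2r₁ + 2r₂]`, sensor 1 at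
`(2r₂ + r₁, 0)` with radius `r₁` and sensor 2 at `(2r₁ + r₂, 0)` with radius `r₂`, is
feasible with respect to `2r₁`; every covering relocation moves some sensor at least
`2r₁`; hence the minimum possible maximum movement equals `2r₁`. -/
theorem stmt_4 (r₁ r₂ : ℝ) (h1 : 0 < r₁) (h12 : r₁ ≤ r₂) :
    Feasible ![2 * r₂ + r₁, 2 * r₁ + r₂] ![0, 0] ![r₁, r₂] (2 * r₁ + 2 * r₂) (2 * r₁) ∧
    (∀ (T : Finset (Fin 2)) (p : Fin 2 → ℝ),
      (∀ q ∈ Set.Icc (0 : ℝ) (2 * r₁ + 2 * r₂), ∃ i ∈ T, |q - p i| ≤ ![r₁, r₂] i) →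
      ∃ i ∈ T, 2 * r₁ ≤
        Real.sqrt ((![2 * r₂ + r₁, 2 * r₁ + r₂] i - p i) ^ 2 + (![(0 : ℝ), 0] i) ^ 2)) ∧
    IsLeast {D : ℝ | 0 ≤ D ∧
        Feasible ![2 * r₂ + r₁, 2 * r₁ + r₂] ![0, 0] ![r₁, r₂] (2 * r₁ + 2 * r₂) D}
      (2 * r₁) := by
  refine ⟨feas_aux r₁ r₂ h1 h12, fun T p h => low_aux r₁ r₂ h1 h12 T p h, ?_, ?_⟩
  · exact ⟨by linarith, feas_aux r₁ r₂ h1 h12⟩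
  · rintro D ⟨hD0, T, p, hmove, hcov⟩
    obtain ⟨i, hiT, hi⟩ := low_aux r₁ r₂ h1 h12 T p hcov
    exact le_trans hi (hmove i hiT)
end

section
/- Consider an MMSM instance and D ≥ 0. Suppose that for each sensor i with |yᵢ| ≤ D there is a Lebesgue-measurable set Aᵢ ⊆ [lᵢ(D), gᵢ(D)] ∩ [0, M] with Lebesgue measure at most 2rᵢ, such that the union of all the sets Aᵢ contains [0, M]. Then the instance is feasible with respect to D + r_max, where r_max = maxᵢ rᵢ. -/
open MeasureTheory

open Set
open scoped ENNReal

/-!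
Read sensor `i` as a job with release time `lᵢ`, deadline `gᵢ` and length `2rᵢ ≤ 2ρ`, where
`ρ = r_max`; the sets `Aᵢ` are a preemptive schedule of the barrier. Build a non-preemptive one
earliest deadline first (EDF): with `W` the union of the sets of the jobs already placed and
`t = |W|`, take, among the jobs with `Aᵢ ⊄ W` released by `t + ρ`, one with the least deadline,
and let it cover `[t, |W ∪ Aᵢ|]`, of length at most `2rᵢ`. It ends by `gᵢ + ρ` thanks to the
invariant `DeadlineBound`: for each pending job `u`, `W` together with the sets of the pending
jobs due by `gᵤ` has measure at most `gᵤ + ρ`. Placing `i` preserves it for `gᵢ ≤ gᵤ` by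
monotonicity, and for `gᵤ < gᵢ` because the jobs due by `gᵤ` are released only after `t + ρ`,
so they lie in `(t + ρ, gᵤ]`, while `|W ∪ Aᵢ| ≤ t + 2ρ`. Finally, a sensor covering an interval
of length `2r` inside `[l - ρ, g + ρ]` moves by at most `D + ρ`.
-/

lemma measure_union_le_ofReal_measureReal_add {α : Type*} [MeasurableSpace α] {μ : Measure α}
    {s t : Set α} {c : ℝ} (hs : μ s ≠ ∞) (ht : μ t ≤ ENNReal.ofReal c) (hc : 0 ≤ c) :
    μ (s ∪ t) ≤ ENNReal.ofReal (μ.real s + c) :=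
  calc μ (s ∪ t) ≤ μ s + μ t := measure_union_le _ _
    _ ≤ ENNReal.ofReal (μ.real s) + ENNReal.ofReal c := by
        rw [ofReal_measureReal hs]; exact add_le_add_right ht _
    _ = ENNReal.ofReal (μ.real s + c) := (ENNReal.ofReal_add measureReal_nonneg hc).symm

section Scheduling

variable {ι : Type*} (l g w : ι → ℝ) (ρ : ℝ) (A : ι → Set ℝ)

/-- `W` is the part of the barrier consumed by the jobs already placed, `R` the set of pending
jobs. -/
def DeadlineBound (R : Finset ι) (W : Set ℝ) : Prop :=
  ∀ u ∈ R, (A u \ W).Nonempty →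
    volume (W ∪ ⋃ v ∈ {v ∈ R | g v ≤ g u}, A v) ≤ ENNReal.ofReal (g u + ρ)

def IsEDFChoice (R : Finset ι) (W : Set ℝ) (i : ι) : Prop :=
  i ∈ R ∧ (A i \ W).Nonempty ∧ l i ≤ volume.real W + ρ ∧
    ∀ v ∈ R, (A v \ W).Nonempty → g v < g i → volume.real W + ρ < l v

variable {l g w ρ A} {R : Finset ι} {W : Set ℝ} {i : ι}

lemma exists_isEDFChoice {M : ℝ} (hρ : 0 < ρ) (hA : ∀ j ∈ R, A j ⊆ Icc (l j) (g j))
    (hW : volume W ≠ ∞) (hWM : volume.real W < M) (hcov : Icc 0 M ⊆ W ∪ ⋃ j ∈ R, A j) :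
    ∃ i, IsEDFChoice l g ρ A R W i := by
  classical
  set t := volume.real W
  obtain ⟨q, ⟨hq0, hqM⟩, hqW⟩ : (Icc 0 (min M (t + ρ)) \ W).Nonempty := by
    by_contra! h
    have := measure_mono (μ := volume) (sdiff_eq_empty.1 h)
    rw [Real.volume_Icc, ← ofReal_measureReal hW, ENNReal.ofReal_le_ofReal_iff measureReal_nonneg,
      sub_zero, min_le_iff] at this
    rcases this with h | h <;> linarith
  obtain ⟨j, hjR, hqj⟩ : ∃ j ∈ R, q ∈ A j := by
    simpa [hqW] using hcov ⟨hq0, hqM.trans (min_le_left _ _)⟩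
  have hC : {j ∈ R | (A j \ W).Nonempty ∧ l j ≤ t + ρ}.Nonempty :=
    ⟨j, Finset.mem_filter.2
      ⟨hjR, ⟨q, hqj, hqW⟩, (hA j hjR hqj).1.trans (hqM.trans (min_le_right _ _))⟩⟩
  obtain ⟨i, hiC, hmin⟩ := Finset.exists_min_image _ g hC
  obtain ⟨hiR, hiW, hil⟩ := Finset.mem_filter.1 hiC
  refine ⟨i, hiR, hiW, hil, fun v hvR hvW hvi => ?_⟩
  by_contra! hvl
  exact (hmin v (Finset.mem_filter.2 ⟨hvR, hvW, hvl⟩)).not_gt hvi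

lemma DeadlineBound.volume_union_le (h : DeadlineBound g ρ A R W) (hi : i ∈ R)
    (hiW : (A i \ W).Nonempty) : volume (W ∪ A i) ≤ ENNReal.ofReal (g i + ρ) := by
  refine (measure_mono (union_subset_union_right W ?_)).trans (h i hi hiW)
  exact Finset.subset_set_biUnion_of_mem (Finset.mem_filter.2 ⟨hi, le_rfl⟩)

lemma deadlineBound_empty (hρ : 0 ≤ ρ) (hA : ∀ j ∈ R, A j ⊆ Icc (l j) (g j) ∩ Ici 0) :
    DeadlineBound g ρ A R ∅ := by
  intro u _ _
  calc volume (∅ ∪ ⋃ v ∈ {v ∈ R | g v ≤ g u}, A v) ≤ volume (Icc 0 (g u)) := by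
        refine measure_mono ?_
        simp only [empty_union, iUnion_subset_iff, Finset.mem_filter]
        exact fun v hv x hx => ⟨(hA v hv.1 hx).2, (hA v hv.1 hx).1.2.trans hv.2⟩
    _ ≤ ENNReal.ofReal (g u + ρ) := by
        rw [Real.volume_Icc, sub_zero]
        exact ENNReal.ofReal_le_ofReal (by linarith)

lemma DeadlineBound.erase [DecidableEq ι] (h : DeadlineBound g ρ A R W) (hρ : 0 ≤ ρ)
    (hA : ∀ j ∈ R, A j ⊆ Icc (l j) (g j)) (hi : IsEDFChoice l g ρ A R W i)
    (hWi : volume (W ∪ A i) ≤ ENNReal.ofReal (volume.real W + 2 * ρ)) :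
    DeadlineBound g ρ A (R.erase i) (W ∪ A i) := by
  obtain ⟨hiR, -, -, hearliest⟩ := hi
  intro u hu huW
  have huR := Finset.mem_of_mem_erase hu
  have huW' : (A u \ W).Nonempty := huW.mono (sdiff_subset_sdiff_right subset_union_left)
  rcases le_or_gt (g i) (g u) with hiu | hui
  · refine le_trans (measure_mono ?_) (h u huR huW')
    have hiu' : i ∈ {v ∈ R | g v ≤ g u} := Finset.mem_filter.2 ⟨hiR, hiu⟩
    rintro x ((hx | hx) | hx)
    · exact Or.inl hx
    · exact Or.inr (Finset.subset_set_biUnion_of_mem hiu' hx)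
    · exact Or.inr (biUnion_subset_biUnion_left
        (Finset.coe_subset.2 (Finset.filter_subset_filter _ (R.erase_subset i))) hx)
  · set t := volume.real W
    have hlu : t + ρ < l u := hearliest u huR huW' hui
    have hug : l u ≤ g u := by
      obtain ⟨x, hx, -⟩ := huW
      exact (hA u huR hx).1.trans (hA u huR hx).2
    have hsub : W ∪ A i ∪ ⋃ v ∈ {v ∈ R.erase i | g v ≤ g u}, A v ⊆
        (W ∪ A i) ∪ Ioc (t + ρ) (g u) := by
      rintro x (hx | hx)
      · exact Or.inl hx
      by_cases hxW : x ∈ W ∪ A i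
      · exact Or.inl hxW
      simp only [mem_iUnion, Finset.mem_filter] at hx
      obtain ⟨v, ⟨hvR, hvu⟩, hxv⟩ := hx
      have hvR' := Finset.mem_of_mem_erase hvR
      have hlv := hearliest v hvR' ⟨x, hxv, fun hxW' => hxW (Or.inl hxW')⟩ (hvu.trans_lt hui)
      exact Or.inr ⟨hlv.trans_le (hA v hvR' hxv).1, (hA v hvR' hxv).2.trans hvu⟩
    calc _ ≤ volume (W ∪ A i) + volume (Ioc (t + ρ) (g u)) :=
          (measure_mono hsub).trans (measure_union_le _ _)
      _ ≤ ENNReal.ofReal (t + 2 * ρ) + ENNReal.ofReal (g u - (t + ρ)) := by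
          rw [Real.volume_Ioc]; gcongr
      _ = ENNReal.ofReal (g u + ρ) := by
          rw [← ENNReal.ofReal_add (by positivity) (by linarith)]; ring_nf

lemma biUnion_insert_update_Icc [DecidableEq ι] {T : Finset ι} {a b : ι → ℝ} (hiT : i ∉ T)
    (s s' : ℝ) :
    ⋃ j ∈ insert i T, Icc (Function.update a i s j) (Function.update b i s' j) =
      Icc s s' ∪ ⋃ j ∈ T, Icc (a j) (b j) := by
  simp only [Function.apply_update₂ (fun _ => Icc)]
  exact Finset.set_biUnion_insert_update _ hiT

lemma exists_schedule_of_deadlineBound [DecidableEq ι] {S : Finset ι} {M : ℝ} (hρ : 0 < ρ)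
    (hA : ∀ j ∈ S, A j ⊆ Icc (l j) (g j) ∩ Ici 0)
    (hAw : ∀ j ∈ S, volume (A j) ≤ ENNReal.ofReal (w j)) (hw : ∀ j ∈ S, 0 ≤ w j ∧ w j ≤ 2 * ρ) :
    ∀ R ⊆ S, ∀ W : Set ℝ, volume W ≠ ∞ → Icc 0 M ⊆ W ∪ ⋃ j ∈ R, A j → DeadlineBound g ρ A R W →
      ∃ T ⊆ R, ∃ a b : ι → ℝ, (∀ j ∈ T, b j - a j ≤ w j ∧ l j - ρ ≤ a j ∧ b j ≤ g j + ρ) ∧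
        Ico (volume.real W) M ⊆ ⋃ j ∈ T, Icc (a j) (b j) := by
  intro R
  induction R using Finset.strongInduction with | H R ih => ?_
  intro hRS W hW hcov hinv
  set t := volume.real W
  rcases le_or_gt M t with hMt | htM
  · exact ⟨∅, Finset.empty_subset R, 0, 0, by simp, by simp [Ico_eq_empty_of_le hMt]⟩
  have hAR : ∀ j ∈ R, A j ⊆ Icc (l j) (g j) := fun j hj x hx => (hA j (hRS hj) hx).1
  obtain ⟨i, hi⟩ := exists_isEDFChoice hρ hAR hW htM hcov
  have ⟨hiR, hiW, hil, _⟩ := hi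
  have hiS := hRS hiR
  have hvol : volume (W ∪ A i) ≤ ENNReal.ofReal (t + w i) :=
    measure_union_le_ofReal_measureReal_add hW (hAw i hiS) (hw i hiS).1
  set t' := volume.real (W ∪ A i)
  have hgi : 0 ≤ g i := by
    obtain ⟨x, hx, -⟩ := hiW
    exact (hA i hiS hx).2.trans (hA i hiS hx).1.2
  have ht't : t' ≤ t + w i :=
    ENNReal.toReal_le_of_le_ofReal (add_nonneg measureReal_nonneg (hw i hiS).1) hvol
  have ht'g : t' ≤ g i + ρ :=
    ENNReal.toReal_le_of_le_ofReal (by positivity) (hinv.volume_union_le hiR hiW)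
  have hcov' : Icc 0 M ⊆ (W ∪ A i) ∪ ⋃ j ∈ R.erase i, A j := by
    rwa [union_assoc, ← Finset.set_biUnion_insert, Finset.insert_erase hiR]
  have hinv' : DeadlineBound g ρ A (R.erase i) (W ∪ A i) := by
    refine hinv.erase hρ.le hAR hi (hvol.trans (ENNReal.ofReal_le_ofReal ?_))
    linarith [(hw i hiS).2]
  obtain ⟨T, hTR, a, b, hTfit, hTcov⟩ := ih (R.erase i) (Finset.erase_ssubset hiR)
    ((R.erase_subset i).trans hRS) (W ∪ A i) (ne_top_of_le_ne_top ENNReal.ofReal_ne_top hvol)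
    hcov' hinv'
  have hiT : i ∉ T := fun h => (Finset.mem_erase.1 (hTR h)).1 rfl
  refine ⟨insert i T, Finset.insert_subset hiR (hTR.trans (R.erase_subset i)),
    Function.update a i t, Function.update b i t', ?_, ?_⟩
  · rw [Finset.forall_mem_insert, Function.update_self, Function.update_self]
    refine ⟨⟨by linarith, by linarith, ht'g⟩, fun j hj => ?_⟩
    have hji : j ≠ i := fun h => hiT (h ▸ hj)
    simpa only [Function.update_of_ne hji] using hTfit j hj
  · rw [biUnion_insert_update_Icc hiT]
    exact Ico_subset_Ico_union_Ico.trans (union_subset_union Ico_subset_Icc_self hTcov)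

theorem exists_nonpreemptive_schedule [DecidableEq ι] {S : Finset ι} {M : ℝ} (hρ : 0 < ρ)
    (hM : 0 < M) (hA : ∀ j ∈ S, A j ⊆ Icc (l j) (g j) ∩ Ici 0)
    (hAw : ∀ j ∈ S, volume (A j) ≤ ENNReal.ofReal (w j)) (hw : ∀ j ∈ S, 0 ≤ w j ∧ w j ≤ 2 * ρ)
    (hcov : Icc 0 M ⊆ ⋃ j ∈ S, A j) :
    ∃ T ⊆ S, ∃ a b : ι → ℝ, (∀ j ∈ T, b j - a j ≤ w j ∧ l j - ρ ≤ a j ∧ b j ≤ g j + ρ) ∧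
      Icc 0 M ⊆ ⋃ j ∈ T, Icc (a j) (b j) := by
  obtain ⟨T, hTS, a, b, hfit, hTcov⟩ := exists_schedule_of_deadlineBound hρ hA hAw hw S
    subset_rfl ∅ (by simp) (by simpa using hcov) (deadlineBound_empty hρ.le hA)
  refine ⟨T, hTS, a, b, hfit, ?_⟩
  rw [← closure_Ico hM.ne]
  exact closure_minimal (by simpa using hTcov) (isClosed_biUnion_finset fun _ _ => isClosed_Icc)

end Scheduling

lemma exists_position_covering_Icc {x y r D ρ a b : ℝ} (hy : |y| ≤ D) (hρ : 0 ≤ ρ)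
    (hab : b - a ≤ 2 * r) (ha : lpos x y r D - ρ ≤ a) (hb : b ≤ gpos x y r D + ρ) :
    ∃ p, √((x - p) ^ 2 + y ^ 2) ≤ D + ρ ∧ ∀ q ∈ Icc a b, |q - p| ≤ r := by
  set s := √(D ^ 2 - y ^ 2)
  have hD : 0 ≤ D := (abs_nonneg y).trans hy
  have hs0 : 0 ≤ s := Real.sqrt_nonneg _
  have hy2 : y ^ 2 ≤ D ^ 2 := sq_le_sq' (abs_le.1 hy).1 (abs_le.1 hy).2
  have hs2 : s ^ 2 = D ^ 2 - y ^ 2 := Real.sq_sqrt (by linarith)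
  have hsD : s ≤ D := Real.sqrt_le_iff.2 ⟨hD, by linarith [sq_nonneg y]⟩
  rw [lpos] at ha
  rw [gpos] at hb
  set p := max (b - r) (x - s - ρ)
  have hxp : |x - p| ≤ s + ρ := abs_le.2 ⟨by grind, by grind⟩
  refine ⟨p, Real.sqrt_le_iff.2 ⟨by linarith, ?_⟩, fun q hq => abs_le.2 ⟨by grind, by grind⟩⟩
  nlinarith [sq_abs (x - p), abs_nonneg (x - p), mul_le_mul_of_nonneg_right hsD hρ]

theorem stmt_6_general {n : ℕ} (x y r : Fin n → ℝ) (M : ℝ) (hM : 0 < M)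
    (hr : ∀ i, 0 < r i) (D : ℝ)
    (rmax : ℝ) (hrmax : IsGreatest (Set.range r) rmax)
    (A : Fin n → Set ℝ)
    (hA : ∀ i, |y i| ≤ D →
      MeasurableSet (A i) ∧
      A i ⊆ Set.Icc (lpos (x i) (y i) (r i) D) (gpos (x i) (y i) (r i) D) ∩
        Set.Icc (0 : ℝ) M ∧
      volume (A i) ≤ ENNReal.ofReal (2 * r i))
    (hcover : Set.Icc (0 : ℝ) M ⊆ ⋃ i, ⋃ (_ : |y i| ≤ D), A i) :
    Feasible x y r M (D + rmax) := by
  obtain ⟨i₀, hi₀⟩ := hrmax.1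
  have hρ : 0 < rmax := hi₀ ▸ hr i₀
  set S := Finset.univ.filter (fun i => |y i| ≤ D)
  have hS : ∀ {i}, i ∈ S ↔ |y i| ≤ D := by simp [S]
  obtain ⟨T, hTS, a, b, hfit, hcovT⟩ := exists_nonpreemptive_schedule
    (l := fun i => lpos (x i) (y i) (r i) D) (g := fun i => gpos (x i) (y i) (r i) D)
    (w := fun i => 2 * r i) (A := A) (S := S) hρ hM
    (fun j hj _ hx => ⟨((hA j (hS.1 hj)).2.1 hx).1, ((hA j (hS.1 hj)).2.1 hx).2.1⟩)
    (fun j hj => (hA j (hS.1 hj)).2.2)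
    (fun j _ => ⟨by linarith [hr j], by linarith [hrmax.2 ⟨j, rfl⟩]⟩)
    (by simpa [S] using hcover)
  choose! p hp using fun j (hj : j ∈ T) =>
    have ⟨hab, ha, hb⟩ := hfit j hj
    exists_position_covering_Icc (hS.1 (hTS hj)) hρ.le hab ha hb
  refine ⟨T, p, fun j hj => (hp j hj).1, fun q hq => ?_⟩
  obtain ⟨j, hjT, hqj⟩ := mem_iUnion₂.1 (hcovT hq)
  exact ⟨j, hjT, (hp j hjT).2 q hqj⟩

/-- If for each sensor `i` with `|yᵢ| ≤ D` there is a measurable set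
`Aᵢ ⊆ [lᵢ(D), gᵢ(D)] ∩ [0, M]` of measure at most `2rᵢ` whose union contains `[0, M]`,
then the instance is feasible with respect to `D + r_max`. -/
theorem stmt_6 {n : ℕ} (x y r : Fin n → ℝ) (M : ℝ) (hM : 0 < M)
    (hr : ∀ i, 0 < r i) (D : ℝ) (hD : 0 ≤ D)
    (rmax : ℝ) (hrmax : IsGreatest (Set.range r) rmax)
    (A : Fin n → Set ℝ)
    (hA : ∀ i, |y i| ≤ D →
      MeasurableSet (A i) ∧
      A i ⊆ Set.Icc (lpos (x i) (y i) (r i) D) (gpos (x i) (y i) (r i) D) ∩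
        Set.Icc (0 : ℝ) M ∧
      volume (A i) ≤ ENNReal.ofReal (2 * r i))
    (hcover : Set.Icc (0 : ℝ) M ⊆ ⋃ i, ⋃ (_ : |y i| ≤ D), A i) :
    Feasible x y r M (D + rmax) :=
  stmt_6_general x y r M hM hr D rmax hrmax A hA hcover
end

section
/- Let 0 < r₁ ≤ r₂ and consider the MMSM instance with barrier [0, 2r₁ + 2r₂] × {0} and two sensors both located at (r₁ + r₂, 0), sensor 1 with radius r₁ and sensor 2 with radius r₂. Then the instance is feasible with respect to r₂, and every relocation that covers the barrier has some sensor with movement at least r₂; hence the minimum possible maximum movement equals r₂. -/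
open Matrix

theorem isLeast_feasible_of_forall_covers {n : ℕ} {x y r : Fin n → ℝ} {M D₀ : ℝ}
    (hD₀ : 0 ≤ D₀) (hfeas : Feasible x y r M D₀)
    (hlower : ∀ (T : Finset (Fin n)) (p : Fin n → ℝ),
      (∀ q ∈ Set.Icc 0 M, ∃ i ∈ T, |q - p i| ≤ r i) →
      ∃ i ∈ T, D₀ ≤ Real.sqrt ((x i - p i) ^ 2 + y i ^ 2)) :
    IsLeast {D | 0 ≤ D ∧ Feasible x y r M D} D₀ := by
  refine ⟨⟨hD₀, hfeas⟩, ?_⟩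
  rintro D ⟨-, T, p, hmove, hcover⟩
  obtain ⟨i, hiT, hi⟩ := hlower T p hcover
  exact hi.trans (hmove i hiT)

theorem sqrt_sq_sub_add_sq_of_colocated_on_axis (c : ℝ) (p : Fin 2 → ℝ) (i : Fin 2) :
    Real.sqrt ((![c, c] i - p i) ^ 2 + (![(0 : ℝ), 0] i) ^ 2) = |c - p i| := by
  fin_cases i <;> simp [Real.sqrt_sq_eq_abs]

theorem feasible_colocated_pair {r₁ r₂ : ℝ} (h1 : 0 ≤ r₁) (h12 : r₁ ≤ r₂) :
    Feasible ![r₁ + r₂, r₁ + r₂] ![0, 0] ![r₁, r₂] (2 * r₁ + 2 * r₂) r₂ := by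
  refine ⟨Finset.univ, ![r₁, 2 * r₁ + r₂], ?_, ?_⟩
  · simp only [Finset.mem_univ, forall_const, Fin.forall_fin_two,
      sqrt_sq_sub_add_sq_of_colocated_on_axis, cons_val_zero, cons_val_one, abs_le]
    refine ⟨⟨?_, ?_⟩, ?_, ?_⟩ <;> linarith
  · rintro q ⟨hq0, hqM⟩
    rcases le_total q (2 * r₁) with hq | hq
    · refine ⟨0, Finset.mem_univ _, abs_le.mpr ⟨?_, ?_⟩⟩ <;>
        simp only [cons_val_zero] <;> linarith
    · refine ⟨1, Finset.mem_univ _, abs_le.mpr ⟨?_, ?_⟩⟩ <;>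
        simp only [cons_val_one, cons_val_zero] <;> linarith

theorem exists_le_abs_sub_of_covers_colocated_pair {r₁ r₂ : ℝ} (h1 : 0 < r₁)
    (h2 : 0 ≤ r₂) (T : Finset (Fin 2)) (p : Fin 2 → ℝ)
    (hcover : ∀ q ∈ Set.Icc (0 : ℝ) (2 * r₁ + 2 * r₂),
      ∃ i ∈ T, |q - p i| ≤ ![r₁, r₂] i) :
    ∃ i ∈ T, r₂ ≤ |r₁ + r₂ - p i| := by
  have hM : (0 : ℝ) ≤ 2 * r₁ + 2 * r₂ := by positivity
  have left := hcover 0 ⟨le_rfl, hM⟩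
  have right := hcover _ ⟨hM, le_rfl⟩
  simp only [Fin.exists_fin_two, cons_val_zero, cons_val_one, abs_le] at left right
  rcases left with ⟨h0T, h0, -⟩ | ⟨-, hp₁_le, -⟩
  · exact ⟨0, h0T, le_abs.mpr (Or.inl (by linarith))⟩
  rcases right with ⟨h0T, -, h0⟩ | ⟨-, -, hp₁_ge⟩
  · exact ⟨0, h0T, le_abs.mpr (Or.inr (by linarith))⟩
  · -- the large sensor alone cannot reach both ends of a barrier longer than its diameter
    linarith

/-- For `0 < r₁ ≤ r₂`, the MMSM instance with barrier `[0, 2r₁ + 2r₂]` and two sensors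
both at `(r₁ + r₂, 0)` with radii `r₁` and `r₂`, is feasible with respect to `r₂`;
every covering relocation moves some sensor at least `r₂`; hence the minimum possible
maximum movement equals `r₂`. -/
theorem stmt_8 (r₁ r₂ : ℝ) (h1 : 0 < r₁) (h12 : r₁ ≤ r₂) :
    Feasible ![r₁ + r₂, r₁ + r₂] ![0, 0] ![r₁, r₂] (2 * r₁ + 2 * r₂) r₂ ∧
    (∀ (T : Finset (Fin 2)) (p : Fin 2 → ℝ),
      (∀ q ∈ Set.Icc (0 : ℝ) (2 * r₁ + 2 * r₂), ∃ i ∈ T, |q - p i| ≤ ![r₁, r₂] i) →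
      ∃ i ∈ T, r₂ ≤
        Real.sqrt ((![r₁ + r₂, r₁ + r₂] i - p i) ^ 2 + (![(0 : ℝ), 0] i) ^ 2)) ∧
    IsLeast {D : ℝ | 0 ≤ D ∧
        Feasible ![r₁ + r₂, r₁ + r₂] ![0, 0] ![r₁, r₂] (2 * r₁ + 2 * r₂) D} r₂ := by
  have hcovers : ∀ (T : Finset (Fin 2)) (p : Fin 2 → ℝ),
      (∀ q ∈ Set.Icc (0 : ℝ) (2 * r₁ + 2 * r₂), ∃ i ∈ T, |q - p i| ≤ ![r₁, r₂] i) →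
      ∃ i ∈ T, r₂ ≤
        Real.sqrt ((![r₁ + r₂, r₁ + r₂] i - p i) ^ 2 + (![(0 : ℝ), 0] i) ^ 2) := by
    simpa only [sqrt_sq_sub_add_sq_of_colocated_on_axis] using
      exists_le_abs_sub_of_covers_colocated_pair h1 (h1.le.trans h12)
  have hfeas := feasible_colocated_pair h1.le h12
  exact ⟨hfeas, hcovers, isLeast_feasible_of_forall_covers (h1.le.trans h12) hfeas hcovers⟩
end

section
/- Consider an MMSM instance in which M and all radii rᵢ are positive integers, and let D ≥ 0. Suppose there exists a function f : {0, 1, …, M − 1} → {1, …, n} such that for every j one has |y_{f(j)}| ≤ D and [j, j + 1] ⊆ [l_{f(j)}(D), g_{f(j)}(D)], and such that each sensor i satisfies |f⁻¹(i)| ≤ 2rᵢ. Then the instance is feasible with respect to D + r_max, where r_max = maxᵢ rᵢ. -/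
open scoped Classical

section BarrierAux

variable {n M : ℕ} (x y : Fin n → ℝ) (r : Fin n → ℕ) (D : ℝ) (f : Fin M → Fin n) (Rn : ℕ)

/-- The set of unit segments (tokens) assigned to sensor `i`. -/
def Stok (i : Fin n) : Finset (Fin M) := Finset.univ.filter (fun j => f j = i)

/-- The number of segments assigned to sensor `i`. -/
def ktok (i : Fin n) : ℕ := (Stok f i).card

lemma mem_Stok {i : Fin n} {j : Fin M} : j ∈ Stok f i ↔ f j = i := by
  simp [Stok]

lemma sum_ktok (A : Finset (Fin n)) :
    ∑ i ∈ A, ktok f i = (A.biUnion (Stok f)).card := by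
  have hd : ∀ i ∈ A, ∀ i' ∈ A, i ≠ i' → Disjoint (Stok f i) (Stok f i') := by
    intro i _ i' _ hne
    simp only [Finset.disjoint_left, mem_Stok]
    rintro j rfl h; exact hne h
  rw [Finset.card_biUnion hd]; rfl

lemma sum_ktok_univ : ∑ i, ktok f i = M := by
  have h := Finset.card_eq_sum_card_fiberwise
    (fun j (_ : j ∈ Finset.univ) => Finset.mem_univ (f j))
  simp only [Finset.card_univ, Fintype.card_fin] at h
  simpa [ktok, Stok] using h.symm

lemma sum_ktok_le (A : Finset (Fin n)) (lo hi : ℕ)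
    (h : ∀ i ∈ A, ∀ j ∈ Stok f i, lo ≤ (j : ℕ) ∧ (j : ℕ) < hi) :
    ∑ i ∈ A, ktok f i ≤ hi - lo := by
  rw [sum_ktok]
  calc (A.biUnion (Stok f)).card ≤ (Finset.Ico lo hi).card := by
        refine Finset.card_le_card_of_injOn (fun j => (j : ℕ)) ?_ ?_
        · intro j hj
          obtain ⟨i, hiA, hji⟩ := Finset.mem_biUnion.mp hj
          exact Finset.mem_Ico.mpr (h i hiA j hji)
        · intro a _ b _ hab; exact Fin.val_injective hab
    _ = hi - lo := Nat.card_Ico lo hi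

/-- Reachable left endpoint (for sensors indexed by `Fin n`). -/
noncomputable def lr (i : Fin n) : ℝ := lpos (x i) (y i) (r i) D

/-- Reachable right endpoint. -/
noncomputable def gr (i : Fin n) : ℝ := gpos (x i) (y i) (r i) D

/-- Lower bound on all tokens of all members of `V`. -/
def LBtok (V : Finset (Fin n)) (lo : ℕ) : Prop := ∀ i ∈ V, ∀ j ∈ Stok f i, lo ≤ (j : ℕ)

/-- Upper bound on all tokens of all members of `V`. -/
def UBtok (V : Finset (Fin n)) (G : ℝ) : Prop :=
  ∀ i ∈ V, ∀ j ∈ Stok f i, ((j : ℕ) : ℝ) + 1 ≤ G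

/-- History invariant of the EDF scheduling process: `R` is the set of remaining
sensors and `t` the current time (length of the covered prefix). For every
deadline bound `G` and every set `W` of remaining available sensors with
deadlines at most `G`, one can account for the elapsed time `t` by a set `V ⊇ W`
of sensors (the extra ones being already scheduled) all of whose tokens are below
`G`, together with times `τ + κ` (the last "inversion" pick), such that all
tokens of `V` lie above `τ + Rn` (unless `τ = κ = 0`). -/
def Hist (R : Finset (Fin n)) (t : ℕ) : Prop :=
  ∀ (G : ℝ) (W : Finset (Fin n)), W ⊆ R →
    (∀ w ∈ W, lr x y r D w ≤ (t : ℝ) + (Rn : ℝ) ∧ gr x y r D w ≤ G) →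
    ∃ (V : Finset (Fin n)) (τ κ : ℕ),
      W ⊆ V ∧ (∀ i ∈ V, i ∉ W → i ∉ R) ∧
      τ + κ + ∑ i ∈ V \ W, ktok f i = t ∧
      ((τ = 0 ∧ κ = 0) ∨ (κ ≤ 2 * Rn ∧ LBtok f V (τ + Rn + 1))) ∧
      UBtok f V G

lemma hist_init (hg : ∀ j : Fin M, ((j : ℕ) : ℝ) + 1 ≤ gr x y r D (f j)) (R : Finset (Fin n)) :
    Hist x y r D f Rn R 0 := by
  intro G W _ hW
  refine ⟨W, 0, 0, Finset.Subset.refl _, ?_, ?_, Or.inl ⟨rfl, rfl⟩, ?_⟩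
  · intro i hi hni; exact absurd hi hni
  · simp
  · intro i hi j hj
    have hfj : f j = i := (mem_Stok f).mp hj
    have := hg j
    rw [hfj] at this
    exact this.trans (hW i hi).2

lemma hist_step
    (hl : ∀ j : Fin M, lr x y r D (f j) ≤ ((j : ℕ) : ℝ))
    (hg : ∀ j : Fin M, ((j : ℕ) : ℝ) + 1 ≤ gr x y r D (f j))
    {R : Finset (Fin n)} {t : ℕ} {w : Fin n}
    (hw : w ∈ R) (havail : lr x y r D w ≤ (t : ℝ) + (Rn : ℝ))
    (hmin : ∀ i ∈ R, lr x y r D i ≤ (t : ℝ) + (Rn : ℝ) → gr x y r D w ≤ gr x y r D i)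
    (hκw : ktok f w ≤ 2 * Rn)
    (hHist : Hist x y r D f Rn R t) :
    Hist x y r D f Rn (R.erase w) (t + ktok f w) := by
  intro G W hWR hWcond
  have hwW : w ∉ W := fun h => (Finset.mem_erase.mp (hWR h)).1 rfl
  by_cases hGw : gr x y r D w ≤ G
  · -- non-inversion case
    set Wold := W.filter (fun i => lr x y r D i ≤ (t : ℝ) + (Rn : ℝ)) with hWold
    set W₀ := insert w Wold with hW₀
    have hWoldW : Wold ⊆ W := Finset.filter_subset _ _
    have hW₀R : W₀ ⊆ R := by
      intro i hi
      rcases Finset.mem_insert.mp hi with h | h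
      · exact h ▸ hw
      · exact Finset.mem_of_mem_erase (hWR (hWoldW h))
    have hW₀cond : ∀ i ∈ W₀, lr x y r D i ≤ (t : ℝ) + (Rn : ℝ) ∧ gr x y r D i ≤ G := by
      intro i hi
      rcases Finset.mem_insert.mp hi with h | h
      · subst h; exact ⟨havail, hGw⟩
      · exact ⟨(Finset.mem_filter.mp h).2, (hWcond i (hWoldW h)).2⟩
    obtain ⟨V', τ, κ, hWV', hVW', hsum', hcase', hUB'⟩ := hHist G W₀ hW₀R hW₀cond
    have hwV' : w ∈ V' := hWV' (Finset.mem_insert_self _ _)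
    have hset : (V' ∪ (W \ Wold)) \ W = insert w (V' \ W₀) := by
      ext a
      constructor
      · intro ha
        obtain ⟨ha1, ha2⟩ := Finset.mem_sdiff.mp ha
        rcases Finset.mem_union.mp ha1 with h1 | h1
        · by_cases haw : a = w
          · exact haw ▸ Finset.mem_insert_self _ _
          · refine Finset.mem_insert_of_mem (Finset.mem_sdiff.mpr ⟨h1, fun hc => ?_⟩)
            rcases Finset.mem_insert.mp hc with h' | h'
            · exact haw h'
            · exact ha2 (hWoldW h')
        · exact absurd (Finset.mem_sdiff.mp h1).1 ha2
      · intro ha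
        rcases Finset.mem_insert.mp ha with rfl | ha
        · exact Finset.mem_sdiff.mpr ⟨Finset.mem_union_left _ hwV', hwW⟩
        · obtain ⟨h1, h2⟩ := Finset.mem_sdiff.mp ha
          refine Finset.mem_sdiff.mpr ⟨Finset.mem_union_left _ h1, fun hc => ?_⟩
          exact (hVW' a h1 h2) (Finset.mem_of_mem_erase (hWR hc))
    have hwnot : w ∉ V' \ W₀ := fun h =>
      (Finset.mem_sdiff.mp h).2 (Finset.mem_insert_self _ _)
    refine ⟨V' ∪ (W \ Wold), τ, κ, ?_, ?_, ?_, ?_, ?_⟩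
    · -- W ⊆ V
      intro i hi
      by_cases hio : lr x y r D i ≤ (t : ℝ) + (Rn : ℝ)
      · exact Finset.mem_union_left _ (hWV' (Finset.mem_insert_of_mem
          (Finset.mem_filter.mpr ⟨hi, hio⟩)))
      · exact Finset.mem_union_right _ (Finset.mem_sdiff.mpr
          ⟨hi, fun h => hio (Finset.mem_filter.mp h).2⟩)
    · -- new elements are not in R.erase w
      intro i hi hniW
      rcases Finset.mem_union.mp hi with h | h
      · by_cases hiW₀ : i ∈ W₀
        · rcases Finset.mem_insert.mp hiW₀ with h' | h'
          · subst h'; exact Finset.notMem_erase _ _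
          · exact absurd (hWoldW h') hniW
        · intro hc; exact (hVW' i h hiW₀) (Finset.mem_of_mem_erase hc)
      · exact absurd (Finset.mem_sdiff.mp h).1 hniW
    · -- the sum identity
      rw [hset, Finset.sum_insert hwnot]
      omega
    · -- case disjunction
      rcases hcase' with h | ⟨h1, h2⟩
      · exact Or.inl h
      · refine Or.inr ⟨h1, ?_⟩
        intro i hi j hj
        rcases Finset.mem_union.mp hi with h | h
        · exact h2 i h j hj
        · have hiW := (Finset.mem_sdiff.mp h).1
          have hio : ¬ lr x y r D i ≤ (t : ℝ) + (Rn : ℝ) := by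
            intro hc
            exact (Finset.mem_sdiff.mp h).2 (Finset.mem_filter.mpr ⟨hiW, hc⟩)
          have hfj : f j = i := (mem_Stok f).mp hj
          have hlj : lr x y r D i ≤ ((j : ℕ) : ℝ) := by rw [← hfj]; exact hl j
          have hτt : τ ≤ t := by omega
          have hcast : ((t + Rn : ℕ) : ℝ) < ((j : ℕ) : ℝ) := by
            push_cast; linarith [not_le.mp hio]
          have hjt : t + Rn < (j : ℕ) := by exact_mod_cast hcast
          omega
    · -- upper bounds
      intro i hi j hj
      rcases Finset.mem_union.mp hi with h | h
      · exact hUB' i h j hj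
      · have hiW := (Finset.mem_sdiff.mp h).1
        have hfj : f j = i := (mem_Stok f).mp hj
        have hgj := hg j
        rw [hfj] at hgj
        exact hgj.trans (hWcond i hiW).2
  · -- inversion case : g w > G
    refine ⟨W, t, ktok f w, Finset.Subset.refl _, ?_, ?_, ?_, ?_⟩
    · intro i hi hni; exact absurd hi hni
    · rw [Finset.sdiff_self]; simp
    · refine Or.inr ⟨hκw, ?_⟩
      intro i hi j hj
      have hiR : i ∈ R := Finset.mem_of_mem_erase (hWR hi)
      have hio : ¬ lr x y r D i ≤ (t : ℝ) + (Rn : ℝ) := by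
        intro hc
        exact hGw (le_trans (hmin i hiR hc) (hWcond i hi).2)
      have hfj : f j = i := (mem_Stok f).mp hj
      have hlj : lr x y r D i ≤ ((j : ℕ) : ℝ) := by rw [← hfj]; exact hl j
      have hcast : ((t + Rn : ℕ) : ℝ) < ((j : ℕ) : ℝ) := by
        push_cast; linarith [not_le.mp hio]
      have hjt : t + Rn < (j : ℕ) := by exact_mod_cast hcast
      omega
    · intro i hi j hj
      have hfj : f j = i := (mem_Stok f).mp hj
      have hgj := hg j
      rw [hfj] at hgj
      exact hgj.trans (hWcond i hi).2


lemma deadline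
    (hg : ∀ j : Fin M, ((j : ℕ) : ℝ) + 1 ≤ gr x y r D (f j))
    {R : Finset (Fin n)} {t : ℕ} {w : Fin n}
    (hw : w ∈ R) (hkw : 0 < ktok f w)
    (havail : lr x y r D w ≤ (t : ℝ) + (Rn : ℝ))
    (hHist : Hist x y r D f Rn R t) :
    (t : ℝ) + (ktok f w : ℝ) ≤ gr x y r D w + (Rn : ℝ) := by
  obtain ⟨V, τ, κ, hWV, hVW, hsum, hcase, hUB⟩ :=
    hHist (gr x y r D w) {w} (Finset.singleton_subset_iff.mpr hw)
      (by intro i hi; rw [Finset.mem_singleton.mp hi]; exact ⟨havail, le_refl _⟩)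
  have hwV : w ∈ V := hWV (Finset.mem_singleton_self w)
  obtain ⟨j0, hj0⟩ := Finset.card_pos.mp hkw
  have hg0 : (0 : ℝ) ≤ gr x y r D w := by
    have h1 := hUB w hwV j0 hj0
    have h2 : (0:ℝ) ≤ ((j0 : ℕ) : ℝ) := Nat.cast_nonneg _
    linarith
  have hfl : ((⌊gr x y r D w⌋₊ : ℕ) : ℝ) ≤ gr x y r D w := Nat.floor_le hg0
  set Gf : ℕ := ⌊gr x y r D w⌋₊ with hGf
  have hub : ∀ i ∈ V, ∀ j ∈ Stok f i, (j : ℕ) < Gf := by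
    intro i hi j hj
    have h1 := hUB i hi j hj
    have h2 : ((j : ℕ) + 1 : ℕ) ≤ Gf := by
      apply Nat.le_floor
      push_cast
      exact h1
    omega
  have hsumV : ∑ i ∈ V \ {w}, ktok f i + ktok f w = ∑ i ∈ V, ktok f i := by
    have := Finset.sum_sdiff (Finset.singleton_subset_iff.mpr hwV)
      (f := fun i => ktok f i)
    simpa using this
  rcases hcase with ⟨hτ, hκ⟩ | ⟨hκ, hLB⟩
  · -- no inversion ever: all tokens below Gf
    have hcnt := sum_ktok_le f V 0 Gf (fun i hi j hj => ⟨Nat.zero_le _, hub i hi j hj⟩)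
    have hNat : t + ktok f w ≤ Gf := by omega
    have : ((t + ktok f w : ℕ) : ℝ) ≤ (Gf : ℝ) := Nat.cast_le.mpr hNat
    push_cast at this
    have hRn0 : (0:ℝ) ≤ (Rn : ℝ) := Nat.cast_nonneg _
    linarith
  · -- last inversion at time τ with length κ ≤ 2 Rn
    have hcnt := sum_ktok_le f V (τ + Rn + 1) Gf
      (fun i hi j hj => ⟨hLB i hi j hj, hub i hi j hj⟩)
    have hNat : t + ktok f w ≤ Gf + Rn := by omega
    have : ((t + ktok f w : ℕ) : ℝ) ≤ ((Gf + Rn : ℕ) : ℝ) := Nat.cast_le.mpr hNat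
    push_cast at this
    linarith

lemma rec_cover
    (hl : ∀ j : Fin M, lr x y r D (f j) ≤ ((j : ℕ) : ℝ))
    (hg : ∀ j : Fin M, ((j : ℕ) : ℝ) + 1 ≤ gr x y r D (f j))
    (hy : ∀ j : Fin M, |y (f j)| ≤ D)
    (hk2 : ∀ i, ktok f i ≤ 2 * r i) (hrR : ∀ i, r i ≤ Rn) (hD : 0 ≤ D) :
    ∀ (c : ℕ) (R : Finset (Fin n)) (t : ℕ), R.card ≤ c →
      (∀ i ∈ R, 0 < ktok f i) → t + ∑ i ∈ R, ktok f i = M →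
      Hist x y r D f Rn R t → t < M →
      ∃ (T : Finset (Fin n)) (p : Fin n → ℝ), T ⊆ R ∧
        (∀ i ∈ T, Real.sqrt ((x i - p i) ^ 2 + (y i) ^ 2) ≤ D + (Rn : ℝ)) ∧
        ∀ q ∈ Set.Icc (t : ℝ) (M : ℝ), ∃ i ∈ T, |q - p i| ≤ (r i : ℝ) := by
  intro c
  induction c with
  | zero =>
    intro R t hc hpos hsum hH htM
    have hR : R = ∅ := Finset.card_eq_zero.mp (Nat.le_zero.mp hc)
    subst hR
    simp only [Finset.sum_empty] at hsum
    omega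
  | succ c ih =>
    intro R t hc hpos hsum hH htM
    -- there is an available sensor
    have hex : ∃ i ∈ R, lr x y r D i ≤ (t : ℝ) + (Rn : ℝ) := by
      by_contra hno
      push_neg at hno
      have hcnt := sum_ktok_le f R (t + Rn + 1) M ?_
      · omega
      · intro i hi j hj
        refine ⟨?_, j.isLt⟩
        have hfj : f j = i := (mem_Stok f).mp hj
        have hlj : lr x y r D i ≤ ((j : ℕ) : ℝ) := by rw [← hfj]; exact hl j
        have hcast : ((t + Rn : ℕ) : ℝ) < ((j : ℕ) : ℝ) := by
          push_cast; linarith [hno i hi]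
        have hjt : t + Rn < (j : ℕ) := by exact_mod_cast hcast
        omega
    -- pick the available sensor with smallest deadline
    obtain ⟨w, hwR, hwav, hwmin⟩ :
        ∃ w ∈ R, lr x y r D w ≤ (t : ℝ) + (Rn : ℝ) ∧
          ∀ i ∈ R, lr x y r D i ≤ (t : ℝ) + (Rn : ℝ) → gr x y r D w ≤ gr x y r D i := by
      classical
      set Av := R.filter (fun i => lr x y r D i ≤ (t : ℝ) + (Rn : ℝ)) with hAvdef
      have hAv : Av.Nonempty := by
        obtain ⟨i, hi, hli⟩ := hex
        exact ⟨i, Finset.mem_filter.mpr ⟨hi, hli⟩⟩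
      obtain ⟨w, hwAv, hmin⟩ := Finset.exists_min_image Av (gr x y r D) hAv
      exact ⟨w, (Finset.mem_filter.mp hwAv).1, (Finset.mem_filter.mp hwAv).2,
        fun i hi hli => hmin i (Finset.mem_filter.mpr ⟨hi, hli⟩)⟩
    have hkw : 0 < ktok f w := hpos w hwR
    have hdl : (t : ℝ) + (ktok f w : ℝ) ≤ gr x y r D w + (Rn : ℝ) :=
      deadline x y r D f Rn hg hwR hkw hwav hH
    obtain ⟨j0, hj0⟩ := Finset.card_pos.mp hkw
    have hfj0 : f j0 = w := (mem_Stok f).mp hj0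
    have hyw : |y w| ≤ D := by rw [← hfj0]; exact hy j0
    set s := Real.sqrt (D ^ 2 - (y w) ^ 2) with hs
    have hs0 : 0 ≤ s := Real.sqrt_nonneg _
    have hy2 : (y w) ^ 2 ≤ D ^ 2 := by
      have h1 := abs_le.mp hyw
      nlinarith [h1.1, h1.2]
    have hsD : s ≤ D := by
      rw [hs]
      calc Real.sqrt (D ^ 2 - (y w) ^ 2) ≤ Real.sqrt (D ^ 2) :=
            Real.sqrt_le_sqrt (by nlinarith [sq_nonneg (y w)])
        _ = D := Real.sqrt_sq hD
    have hs2 : s ^ 2 = D ^ 2 - (y w) ^ 2 := Real.sq_sqrt (by linarith)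
    have hlrw : lr x y r D w = x w - s - (r w : ℝ) := rfl
    have hgrw : gr x y r D w = x w + s + (r w : ℝ) := rfl
    have hk2w : (ktok f w : ℝ) ≤ 2 * (r w : ℝ) := by exact_mod_cast hk2 w
    have hRn0 : (0 : ℝ) ≤ (Rn : ℝ) := Nat.cast_nonneg _
    have hrRw : (r w : ℝ) ≤ (Rn : ℝ) := by exact_mod_cast hrR w
    set pw := max ((t : ℝ) + (ktok f w : ℝ) - (r w : ℝ))
      (lr x y r D w + (r w : ℝ) - (Rn : ℝ)) with hpwdef
    have h1 : pw - (r w : ℝ) ≤ (t : ℝ) := by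
      have hmax : pw ≤ (t : ℝ) + (r w : ℝ) := by
        apply max_le
        · linarith
        · rw [hlrw]; linarith [hwav, hlrw]
      linarith
    have h2 : (t : ℝ) + (ktok f w : ℝ) ≤ pw + (r w : ℝ) := by
      have := le_max_left ((t : ℝ) + (ktok f w : ℝ) - (r w : ℝ))
        (lr x y r D w + (r w : ℝ) - (Rn : ℝ))
      linarith
    have h3low : x w - s - (Rn : ℝ) ≤ pw := by
      rw [hpwdef]
      refine le_trans ?_ (le_max_right _ _)
      rw [hlrw]
      linarith
    have h3high : pw ≤ x w + s + (Rn : ℝ) := by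
      apply max_le
      · rw [hgrw] at hdl; linarith
      · rw [hlrw]; linarith
    have hmove : Real.sqrt ((x w - pw) ^ 2 + (y w) ^ 2) ≤ D + (Rn : ℝ) := by
      have hb : (x w - pw) ^ 2 ≤ (s + (Rn : ℝ)) ^ 2 := by nlinarith
      have hbb : (x w - pw) ^ 2 + (y w) ^ 2 ≤ (D + (Rn : ℝ)) ^ 2 := by nlinarith
      calc Real.sqrt ((x w - pw) ^ 2 + (y w) ^ 2) ≤ Real.sqrt ((D + (Rn : ℝ)) ^ 2) :=
            Real.sqrt_le_sqrt hbb
        _ = D + (Rn : ℝ) := Real.sqrt_sq (by linarith)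
    by_cases hend : t + ktok f w < M
    · -- recurse on the remaining sensors
      have hκw : ktok f w ≤ 2 * Rn :=
        le_trans (hk2 w) (Nat.mul_le_mul_left 2 (hrR w))
      have hHist' := hist_step x y r D f Rn hl hg hwR hwav hwmin hκw hH
      have hsum' : (t + ktok f w) + ∑ i ∈ R.erase w, ktok f i = M := by
        have h := Finset.sum_erase_add R (ktok f) hwR
        omega
      have hcard' : (R.erase w).card ≤ c := by
        have h1 := Finset.card_erase_of_mem hwR
        have h2 := Finset.card_pos.mpr ⟨w, hwR⟩
        omega
      obtain ⟨T, p, hTsub, hmv, hcov⟩ := ih (R.erase w) (t + ktok f w) hcard'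
        (fun i hi => hpos i (Finset.mem_of_mem_erase hi)) hsum' hHist' hend
      refine ⟨insert w T, fun i => if i = w then pw else p i, ?_, ?_, ?_⟩
      · intro i hi
        rcases Finset.mem_insert.mp hi with rfl | hi
        · exact hwR
        · exact Finset.mem_of_mem_erase (hTsub hi)
      · intro i hi
        rcases Finset.mem_insert.mp hi with rfl | hi
        · simpa using hmove
        · have hne : i ≠ w := Finset.ne_of_mem_erase (hTsub hi)
          simpa [hne] using hmv i hi
      · intro q hq
        by_cases hq2 : q ≤ (t : ℝ) + (ktok f w : ℝ)
        · refine ⟨w, Finset.mem_insert_self _ _, ?_⟩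
          have hite : (if w = w then pw else p w) = pw := if_pos rfl
          show |q - (if w = w then pw else p w)| ≤ ((r w : ℕ) : ℝ)
          rw [hite]
          exact abs_le.mpr ⟨by linarith [hq.1], by linarith⟩
        · have hq1 : ((t + ktok f w : ℕ) : ℝ) ≤ q := by
            push_cast; linarith [not_le.mp hq2]
          obtain ⟨i, hiT, hqi⟩ := hcov q ⟨hq1, hq.2⟩
          have hne : i ≠ w := Finset.ne_of_mem_erase (hTsub hiT)
          exact ⟨i, Finset.mem_insert_of_mem hiT, by simpa [hne] using hqi⟩
    · -- the final block: sensor w covers through M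
      push_neg at hend
      refine ⟨{w}, fun _ => pw, Finset.singleton_subset_iff.mpr hwR, ?_, ?_⟩
      · intro i hi
        rw [Finset.mem_singleton.mp hi]
        exact hmove
      · intro q hq
        refine ⟨w, Finset.mem_singleton_self _, abs_le.mpr ⟨?_, ?_⟩⟩
        · linarith [hq.1]
        · have hM2 : ((M : ℕ) : ℝ) ≤ ((t + ktok f w : ℕ) : ℝ) := Nat.cast_le.mpr hend
          push_cast at hM2
          linarith [hq.2]

end BarrierAux

/-- For an MMSM instance with integer barrier length `M` and integer radii: if there is
an assignment `f` of the unit segments `[j, j+1]` (for `j = 0, …, M-1`) to sensors such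
that sensor `f j` satisfies `|y_{f j}| ≤ D` and `[j, j+1] ⊆ [l_{f j}(D), g_{f j}(D)]`,
and each sensor `i` receives at most `2rᵢ` segments, then the instance is feasible with
respect to `D + r_max`. -/
theorem stmt_10 {n : ℕ} (x y : Fin n → ℝ) (M : ℕ) (hM : 0 < M)
    (r : Fin n → ℕ) (hr : ∀ i, 0 < r i)
    (D : ℝ) (hD : 0 ≤ D)
    (rmax : ℝ) (hrmax : IsGreatest (Set.range fun i => (r i : ℝ)) rmax)
    (f : Fin M → Fin n)
    (hf : ∀ j : Fin M, |y (f j)| ≤ D ∧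
      Set.Icc (j : ℝ) ((j : ℝ) + 1) ⊆
        Set.Icc (lpos (x (f j)) (y (f j)) ((r (f j) : ℝ)) D)
          (gpos (x (f j)) (y (f j)) ((r (f j) : ℝ)) D))
    (hcard : ∀ i : Fin n, (Finset.univ.filter fun j => f j = i).card ≤ 2 * r i) :
    Feasible x y (fun i => (r i : ℝ)) (M : ℝ) (D + rmax) := by
  classical
  obtain ⟨i0, hi0⟩ := hrmax.1
  have hi0' : ((r i0 : ℕ) : ℝ) = rmax := hi0
  set Rn := r i0 with hRndef
  have hrR : ∀ i, r i ≤ Rn := by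
    intro i
    have h2 := hrmax.2 (Set.mem_range_self i)
    rw [← hi0'] at h2
    exact_mod_cast h2
  have hl : ∀ j : Fin M, lr x y r D (f j) ≤ ((j : ℕ) : ℝ) := by
    intro j
    have hmem : ((j : ℕ) : ℝ) ∈ Set.Icc ((j : ℕ) : ℝ) (((j : ℕ) : ℝ) + 1) :=
      Set.left_mem_Icc.mpr (by linarith)
    exact ((hf j).2 hmem).1
  have hg : ∀ j : Fin M, ((j : ℕ) : ℝ) + 1 ≤ gr x y r D (f j) := by
    intro j
    have hmem : ((j : ℕ) : ℝ) + 1 ∈ Set.Icc ((j : ℕ) : ℝ) (((j : ℕ) : ℝ) + 1) :=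
      Set.right_mem_Icc.mpr (by linarith)
    exact ((hf j).2 hmem).2
  have hy' : ∀ j : Fin M, |y (f j)| ≤ D := fun j => (hf j).1
  have hk2 : ∀ i, ktok f i ≤ 2 * r i := hcard
  set R₀ := Finset.univ.filter (fun i => 0 < ktok f i) with hR₀
  have hsum0 : 0 + ∑ i ∈ R₀, ktok f i = M := by
    have h1 : ∑ i ∈ R₀, ktok f i = ∑ i, ktok f i := by
      apply Finset.sum_filter_of_ne
      intro i _ h
      omega
    rw [Nat.zero_add, h1, sum_ktok_univ]
  obtain ⟨T, p, hTsub, hmv, hcov⟩ := rec_cover x y r D f Rn hl hg hy' hk2 hrR hD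
    R₀.card R₀ 0 le_rfl (fun i hi => (Finset.mem_filter.mp hi).2) hsum0
    (hist_init x y r D f Rn hg R₀) hM
  refine ⟨T, p, ?_, ?_⟩
  · intro i hi
    have h := hmv i hi
    rwa [hi0'] at h
  · intro q hq
    exact hcov q (by simpa using hq)
end

section
/- Let r > 0 and let (a_t)_{t ≥ 1} and (b_t)_{t ≥ 1} be sequences of nonnegative real numbers with a_t + b_t ≤ 2r for every t ≥ 1. Define o₀ = 0 and o_t = min{a_t − o_{t−1}, b_t + o_{t−1}} for t ≥ 1. Then −r ≤ o_t ≤ r for every t ≥ 0. -/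
/-- Offset-bound invariant of the exchange phase: let `r > 0` and let `(aₜ)` and `(bₜ)`
(`t ≥ 1`) be nonnegative reals with `aₜ + bₜ ≤ 2r`. Define `o₀ = 0` and
`oₜ = min {aₜ - oₜ₋₁, bₜ + oₜ₋₁}` for `t ≥ 1`. Then `-r ≤ oₜ ≤ r` for all `t ≥ 0`. -/
theorem stmt_11 (r : ℝ) (hr : 0 < r) (a b : ℕ → ℝ)
    (ha : ∀ t, 1 ≤ t → 0 ≤ a t) (hb : ∀ t, 1 ≤ t → 0 ≤ b t)
    (hab : ∀ t, 1 ≤ t → a t + b t ≤ 2 * r)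
    (o : ℕ → ℝ) (ho0 : o 0 = 0)
    (hoS : ∀ t : ℕ, o (t + 1) = min (a (t + 1) - o t) (b (t + 1) + o t)) :
    ∀ t : ℕ, -r ≤ o t ∧ o t ≤ r := by
  intro t
  induction t with
  | zero => constructor <;> simp [ho0] <;> linarith
  | succ n ih =>
    obtain ⟨h1, h2⟩ := ih
    have ha' := ha (n+1) (by omega)
    have hb' := hb (n+1) (by omega)
    have hab' := hab (n+1) (by omega)
    rw [hoS n]
    constructor
    · apply le_min <;> linarith
    · calc min (a (n+1) - o n) (b (n+1) + o n)
          ≤ ((a (n+1) - o n) + (b (n+1) + o n)) / 2 := by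
            rcases le_total (a (n+1) - o n) (b (n+1) + o n) with h | h <;>
              simp [min_def, h] <;> linarith
        _ ≤ r := by linarith
end

section
/- If an MMSM instance is feasible with respect to D ≥ 0, then there exists y ∈ {0} ∪ {|yᵢ| : 1 ≤ i ≤ n} with y ≤ D such that D_h(S(y)) ≤ D. In particular, min over y ∈ {0} ∪ {|yᵢ| : 1 ≤ i ≤ n} of (y + D_h(S(y))) is at most 2D. -/
open scoped Classical ENNReal

/-- `D_h(T)`: the optimal maximum horizontal movement for the sensors in `T` (sensor `i`
at `(x i, 0)` with radius `r i`) to cover the barrier `[0, M]`; it is `∞` if no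
horizontal relocation of `T` covers the barrier. -/
noncomputable def Dh {n : ℕ} (x r : Fin n → ℝ) (M : ℝ) (T : Finset (Fin n)) : ℝ≥0∞ :=
  sInf {h : ℝ≥0∞ | ∃ h' : ℝ, 0 ≤ h' ∧ h = ENNReal.ofReal h' ∧
    ∃ p : Fin n → ℝ, (∀ i ∈ T, |p i - x i| ≤ h') ∧
      ∀ q ∈ Set.Icc (0 : ℝ) M, ∃ i ∈ T, |q - p i| ≤ r i}

/-- If an MMSM instance is feasible with respect to `D ≥ 0`, then there is
`y ∈ {0} ∪ {|yᵢ|}` with `y ≤ D` and `D_h(S(y)) ≤ D`; in particular the minimum over such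
`y` of `y + D_h(S(y))` is at most `2D`. Here `S(y) = {i : |yᵢ| ≤ y}` projected onto
the x-axis. -/
theorem stmt_12 {n : ℕ} (x y r : Fin n → ℝ) (M : ℝ) (hM : 0 < M)
    (hr : ∀ i, 0 < r i) (D : ℝ) (hD : 0 ≤ D)
    (hfeas : Feasible x y r M D) :
    (∃ yv ∈ ({0} ∪ Set.range fun i => |y i| : Set ℝ), yv ≤ D ∧
      Dh x r M (Finset.univ.filter fun i => |y i| ≤ yv) ≤ ENNReal.ofReal D) ∧
    sInf ((fun yv => ENNReal.ofReal yv +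
          Dh x r M (Finset.univ.filter fun i => |y i| ≤ yv)) ''
        ({0} ∪ Set.range fun i => |y i|)) ≤ ENNReal.ofReal (2 * D) := by
  obtain ⟨T, p, hmove, hcov⟩ := hfeas
  have key : ∀ i ∈ T, |y i| ≤ D ∧ |p i - x i| ≤ D := by
    intro i hi
    have h1 := hmove i hi
    constructor
    · calc |y i| = Real.sqrt ((y i) ^ 2) := (Real.sqrt_sq_eq_abs _).symm
        _ ≤ Real.sqrt ((x i - p i) ^ 2 + (y i) ^ 2) :=
          Real.sqrt_le_sqrt (by nlinarith [sq_nonneg (x i - p i)])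
        _ ≤ D := h1
    · calc |p i - x i| = Real.sqrt ((x i - p i) ^ 2) := by
            rw [Real.sqrt_sq_eq_abs, abs_sub_comm]
        _ ≤ Real.sqrt ((x i - p i) ^ 2 + (y i) ^ 2) :=
          Real.sqrt_le_sqrt (by nlinarith [sq_nonneg (y i)])
        _ ≤ D := h1
  have hTne : T.Nonempty := by
    obtain ⟨i, hi, -⟩ := hcov 0 ⟨le_refl 0, le_of_lt hM⟩
    exact ⟨i, hi⟩
  obtain ⟨i₀, hi₀, hmax⟩ := T.exists_max_image (fun i => |y i|) hTne
  set yv := |y i₀| with hyv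
  have hyvmem : yv ∈ ({0} ∪ Set.range fun i => |y i| : Set ℝ) := Or.inr ⟨i₀, rfl⟩
  have hyvD : yv ≤ D := (key i₀ hi₀).1
  have hDh : Dh x r M (Finset.univ.filter fun i => |y i| ≤ yv) ≤ ENNReal.ofReal D := by
    apply sInf_le
    refine ⟨D, hD, rfl, fun i => if i ∈ T then p i else x i, ?_, ?_⟩
    · intro i _
      by_cases hi : i ∈ T
      · simp only [hi, if_true]; exact (key i hi).2
      · simp [hi, hD]
    · intro q hq
      obtain ⟨i, hi, hqi⟩ := hcov q hq
      refine ⟨i, ?_, by simpa [hi] using hqi⟩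
      simp only [Finset.mem_filter, Finset.mem_univ, true_and]
      exact hmax i hi
  refine ⟨⟨yv, hyvmem, hyvD, hDh⟩, ?_⟩
  refine le_trans (sInf_le (Set.mem_image_of_mem _ hyvmem)) ?_
  calc ENNReal.ofReal yv + Dh x r M (Finset.univ.filter fun i => |y i| ≤ yv)
      ≤ ENNReal.ofReal D + ENNReal.ofReal D :=
      add_le_add (ENNReal.ofReal_le_ofReal hyvD) hDh
    _ = ENNReal.ofReal (2 * D) := by
      rw [← ENNReal.ofReal_add hD hD]; ring_nf
end

section
/- Consider an MMSM instance with the sensors indexed so that |y₁| ≤ |y₂| ≤ … ≤ |y_n|, and set d_{p,0} = 0 and d_{p,i} = |yᵢ| for 1 ≤ i ≤ n. Suppose the instance is feasible with respect to D ≥ 0, and suppose an index j ∈ {1, …, n} satisfies D_h(S(d_{p,j})) ≤ d_{p,j} and D_h(S(d_{p,j−1})) ≥ d_{p,j−1}. Then min{ d_{p,j} + D_h(S(d_{p,j})), d_{p,j−1} + D_h(S(d_{p,j−1})) } ≤ 2D. -/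
open scoped Classical ENNReal

/-- With sensors sorted so that `|y₁| ≤ … ≤ |y_n|`, `d_{p,0} = 0` and `d_{p,i} = |yᵢ|`:
if the instance is feasible with respect to `D` and an index `j` satisfies
`D_h(S(d_{p,j})) ≤ d_{p,j}` and `D_h(S(d_{p,j-1})) ≥ d_{p,j-1}`, then
`min {d_{p,j} + D_h(S(d_{p,j})), d_{p,j-1} + D_h(S(d_{p,j-1}))} ≤ 2D`. -/
theorem stmt_14 {n : ℕ} (x y r : Fin n → ℝ) (M : ℝ) (hM : 0 < M)
    (hr : ∀ i, 0 < r i)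
    (hsorted : ∀ i j : Fin n, i ≤ j → |y i| ≤ |y j|)
    (dp : Fin (n + 1) → ℝ) (hdp0 : dp 0 = 0)
    (hdpi : ∀ i : Fin n, dp i.succ = |y i|)
    (D : ℝ) (hD : 0 ≤ D) (hfeas : Feasible x y r M D)
    (j : Fin n)
    (hj1 : Dh x r M (Finset.univ.filter fun i => |y i| ≤ dp j.succ) ≤
      ENNReal.ofReal (dp j.succ))
    (hj2 : ENNReal.ofReal (dp j.castSucc) ≤
      Dh x r M (Finset.univ.filter fun i => |y i| ≤ dp j.castSucc)) :
    min
      (ENNReal.ofReal (dp j.succ) +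
        Dh x r M (Finset.univ.filter fun i => |y i| ≤ dp j.succ))
      (ENNReal.ofReal (dp j.castSucc) +
        Dh x r M (Finset.univ.filter fun i => |y i| ≤ dp j.castSucc)) ≤
    ENNReal.ofReal (2 * D) := by
  have hdpjs : 0 ≤ dp j.succ := by rw [hdpi j]; exact abs_nonneg _
  by_cases hcase : dp j.succ ≤ D
  · calc
      min (ENNReal.ofReal (dp j.succ) +
            Dh x r M (Finset.univ.filter fun i => |y i| ≤ dp j.succ))
          (ENNReal.ofReal (dp j.castSucc) +
            Dh x r M (Finset.univ.filter fun i => |y i| ≤ dp j.castSucc))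
          ≤ ENNReal.ofReal (dp j.succ) +
            Dh x r M (Finset.univ.filter fun i => |y i| ≤ dp j.succ) := min_le_left _ _
      _ ≤ ENNReal.ofReal (dp j.succ) + ENNReal.ofReal (dp j.succ) :=
          add_le_add le_rfl hj1
      _ = ENNReal.ofReal (dp j.succ + dp j.succ) :=
          (ENNReal.ofReal_add hdpjs hdpjs).symm
      _ ≤ ENNReal.ofReal (2 * D) := ENNReal.ofReal_le_ofReal (by linarith)
  · push_neg at hcase
    obtain ⟨T, p, hmove, hcov⟩ := hfeas
    -- every sensor used has |y i| ≤ D, hence is in S(dp j.castSucc)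
    have hyD : ∀ i ∈ T, |y i| ≤ D := by
      intro i hi
      have h1 : |y i| = Real.sqrt ((y i) ^ 2) := (Real.sqrt_sq_eq_abs _).symm
      have h2 : Real.sqrt ((y i) ^ 2) ≤ Real.sqrt ((x i - p i) ^ 2 + (y i) ^ 2) :=
        Real.sqrt_le_sqrt (le_add_of_nonneg_left (sq_nonneg _))
      exact h1 ▸ h2.trans (hmove i hi)
    have hy : ∀ i ∈ T, |y i| ≤ dp j.castSucc := by
      intro i hi
      have hlt : |y i| < |y j| := by
        have := (hyD i hi).trans_lt hcase
        rwa [hdpi j] at this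
      have hij : (i : ℕ) < (j : ℕ) := by
        by_contra h
        exact absurd (hsorted j i (by omega)) (not_le.2 hlt)
      have hj0 : 1 ≤ (j : ℕ) := by omega
      set k : Fin n := ⟨(j : ℕ) - 1, by omega⟩ with hk
      have hks : k.succ = j.castSucc := by
        apply Fin.ext
        simp [Fin.val_succ, hk]
        omega
      have hdpk : dp j.castSucc = |y k| := by rw [← hks, hdpi k]
      rw [hdpk]
      exact hsorted i k (by simp [hk, Fin.le_def]; omega)
    have hx : ∀ i ∈ T, |p i - x i| ≤ D := by
      intro i hi
      have h1 : |p i - x i| = Real.sqrt ((x i - p i) ^ 2) := by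
        rw [Real.sqrt_sq_eq_abs, abs_sub_comm]
      have h2 : Real.sqrt ((x i - p i) ^ 2) ≤ Real.sqrt ((x i - p i) ^ 2 + (y i) ^ 2) :=
        Real.sqrt_le_sqrt (le_add_of_nonneg_right (sq_nonneg _))
      exact h1 ▸ h2.trans (hmove i hi)
    have hDh : Dh x r M (Finset.univ.filter fun i => |y i| ≤ dp j.castSucc) ≤
        ENNReal.ofReal D := by
      apply sInf_le
      refine ⟨D, hD, rfl, fun i => if i ∈ T then p i else x i, ?_, ?_⟩
      · intro i _
        by_cases hiT : i ∈ T
        · simpa [hiT] using hx i hiT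
        · simp [hiT, hD]
      · intro q hq
        obtain ⟨i, hiT, hqi⟩ := hcov q hq
        refine ⟨i, Finset.mem_filter.2 ⟨Finset.mem_univ _, hy i hiT⟩, ?_⟩
        simpa [hiT] using hqi
    calc
      min (ENNReal.ofReal (dp j.succ) +
            Dh x r M (Finset.univ.filter fun i => |y i| ≤ dp j.succ))
          (ENNReal.ofReal (dp j.castSucc) +
            Dh x r M (Finset.univ.filter fun i => |y i| ≤ dp j.castSucc))
          ≤ ENNReal.ofReal (dp j.castSucc) +
            Dh x r M (Finset.univ.filter fun i => |y i| ≤ dp j.castSucc) := min_le_right _ _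
      _ ≤ ENNReal.ofReal D + ENNReal.ofReal D := add_le_add (hj2.trans hDh) hDh
      _ = ENNReal.ofReal (D + D) := (ENNReal.ofReal_add hD hD).symm
      _ ≤ ENNReal.ofReal (2 * D) := ENNReal.ofReal_le_ofReal (by linarith)
end
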